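/- Let η : ℝ → ℝ be nondecreasing with η(0) = 0, β ∈ C¹(ℝ) convex with β'(0) = 0, and ℓ > 0. Then for every u ∈ ℝ, β(T_ℓ(u + η(u))) ≤ β(T_ℓ(u) + η(T_ℓ(u))). -/

import Mathlib

noncomputable def trunc (ℓ u : ℝ) : ℝ := max (-ℓ) (min u ℓ)

/-!
Since `β'` is nondecreasing and vanishes at `0`, `β` decreases on `(-∞, 0]` and increases on
`[0, ∞)`, so `β x ≤ β y` whenever `x` lies between `0` and `y`. It thus suffices that
`T_ℓ (u + η u)` lies between `0` and `T_ℓ u + η (T_ℓ u)`. For `u ≥ 0` both truncations are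
`min · ℓ`, and `φ v = v + η v` is monotone with `φ ℓ ≥ ℓ`, so
`min (φ u) ℓ ≤ min (φ u) (φ ℓ) = φ (min u ℓ)`. The case `u ≤ 0` follows by applying this to
`v ↦ -η (-v)`, since `T_ℓ` is odd.
-/

section

variable {β : ℝ → ℝ} (hβ : Differentiable ℝ β) (hβ' : Monotone (deriv β)) (h0 : deriv β 0 = 0)
include hβ hβ' h0

theorem monotoneOn_Ici_zero_of_monotone_deriv : MonotoneOn β (Set.Ici 0) :=
  monotoneOn_of_deriv_nonneg (convex_Ici 0) hβ.continuous.continuousOn hβ.differentiableOn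
    fun x hx ↦ by
      rw [interior_Ici] at hx
      exact h0 ▸ hβ' hx.le

theorem antitoneOn_Iic_zero_of_monotone_deriv : AntitoneOn β (Set.Iic 0) :=
  antitoneOn_of_deriv_nonpos (convex_Iic 0) hβ.continuous.continuousOn hβ.differentiableOn
    fun x hx ↦ by
      rw [interior_Iic] at hx
      exact h0 ▸ hβ' hx.le

theorem apply_le_of_mem_uIcc_zero {x y : ℝ} (hx : x ∈ Set.uIcc 0 y) : β x ≤ β y := by
  rcases Set.mem_uIcc.1 hx with ⟨h0x, hxy⟩ | ⟨hyx, hx0⟩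
  · exact monotoneOn_Ici_zero_of_monotone_deriv hβ hβ' h0 h0x (h0x.trans hxy) hxy
  · exact antitoneOn_Iic_zero_of_monotone_deriv hβ hβ' h0 (hyx.trans hx0) hx0 hyx

end

section

variable {ℓ : ℝ} (hℓ : 0 ≤ ℓ)
include hℓ

theorem trunc_of_nonneg {u : ℝ} (hu : 0 ≤ u) : trunc ℓ u = min u ℓ :=
  max_eq_right ((neg_nonpos.2 hℓ).trans (le_min hu hℓ))

theorem trunc_neg (u : ℝ) : trunc ℓ (-u) = -trunc ℓ u := by
  simp only [trunc, ← max_neg_neg, ← min_neg_neg, neg_neg]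
  rw [max_min_distrib_left, max_eq_right (neg_le_self hℓ), min_comm, max_comm]

theorem trunc_add_mem_uIcc_of_nonneg {η : ℝ → ℝ} (hη : Monotone η) (hη0 : η 0 = 0) {u : ℝ}
    (hu : 0 ≤ u) : trunc ℓ (u + η u) ∈ Set.uIcc 0 (trunc ℓ u + η (trunc ℓ u)) := by
  have hηu : 0 ≤ η u := hη0 ▸ hη hu
  have hηℓ : 0 ≤ η ℓ := hη0 ▸ hη hℓ
  have hφ : Monotone fun v ↦ v + η v := monotone_id.add hη
  rw [trunc_of_nonneg hℓ hu, trunc_of_nonneg hℓ (add_nonneg hu hηu), hφ.map_min]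
  exact Set.mem_uIcc.2 <| .inl
    ⟨le_min (add_nonneg hu hηu) hℓ, min_le_min_left _ (le_add_of_nonneg_right hηℓ)⟩

theorem trunc_add_mem_uIcc {η : ℝ → ℝ} (hη : Monotone η) (hη0 : η 0 = 0) (u : ℝ) :
    trunc ℓ (u + η u) ∈ Set.uIcc 0 (trunc ℓ u + η (trunc ℓ u)) := by
  rcases le_total 0 u with hu | hu
  · exact trunc_add_mem_uIcc_of_nonneg hℓ hη hη0 hu
  have hη' : Monotone fun v ↦ -η (-v) := (hη.comp_antitone monotone_id.neg).neg
  have h := trunc_add_mem_uIcc_of_nonneg hℓ hη' (by simp [hη0]) (neg_nonneg.2 hu)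
  simp only [trunc_neg hℓ, neg_neg, ← neg_add] at h
  simpa [Set.image_neg_uIcc] using Set.mem_image_of_mem Neg.neg h

end

theorem stmt_11 (η : ℝ → ℝ) (hη : Monotone η) (hη0 : η 0 = 0)
    (β : ℝ → ℝ) (hβ : ContDiff ℝ 1 β) (hconv : Monotone (deriv β))
    (h0 : deriv β 0 = 0) (ℓ : ℝ) (hℓ : 0 < ℓ) :
    ∀ u : ℝ, β (trunc ℓ (u + η u)) ≤ β (trunc ℓ u + η (trunc ℓ u)) := fun u ↦
  apply_le_of_mem_uIcc_zero (hβ.differentiable one_ne_zero) hconv h0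
    (trunc_add_mem_uIcc hℓ.le hη hη0 u)
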